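/- arXiv:1809.10495 — 4 statements merged into one kernel-verified Lean document; each statement's English description precedes it below -/
import Mathlib

section
/- Let Π be a planar subdivision, q a point, and γ_q the connected component of the union of edges of Π containing the outer boundary of the face F_q of Π containing q. Suppose for each connected component γ a set F_γ of connected subdivisions covers γ (each edge of γ in at most two subdivisions, and one subdivision containing all boundary edges of U(γ)), and let T be all cells of all vertical decompositions of these subdivisions. If F_q is bounded, then the lowest trapezoid of T stabbed by q belongs to an edge of γ_q; if F_q is the unbounded face, no trapezoid of T contains q. -/
/-- The connected components (as point sets) of a subset of the plane. -/
def componentsOf (s : Set (ℝ × ℝ)) : Set (Set (ℝ × ℝ)) :=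
  {C | ∃ x ∈ s, C = connectedComponentIn s x}

/-- `C` is the outer boundary of the face `F`. -/
def IsOuterBoundary (F C : Set (ℝ × ℝ)) : Prop :=
  C ∈ componentsOf (frontier F) ∧
    ∀ y ∈ F, Bornology.IsBounded (connectedComponentIn Cᶜ y)

/-- `fill K` = `U(K)`: the union of the closures of all bounded faces of `K`. -/
def fill (K : Set (ℝ × ℝ)) : Set (ℝ × ℝ) :=
  ⋃ x ∈ {x | x ∉ K ∧ Bornology.IsBounded (connectedComponentIn Kᶜ x)},
    closure (connectedComponentIn Kᶜ x)

/-- A trapezoid with vertical sides, upper side `top` and lower side `bot`. -/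
structure Trapezoid where
  x₁ : ℝ
  x₂ : ℝ
  top : ℝ → ℝ
  bot : ℝ → ℝ

namespace Trapezoid

def IsValid (t : Trapezoid) : Prop :=
  t.x₁ ≤ t.x₂ ∧ (∃ a b : ℝ, ∀ x, t.top x = a * x + b) ∧
    (∃ a b : ℝ, ∀ x, t.bot x = a * x + b) ∧
    ∀ x ∈ Set.Icc t.x₁ t.x₂, t.bot x ≤ t.top x

def carrier (t : Trapezoid) : Set (ℝ × ℝ) :=
  {p | t.x₁ ≤ p.1 ∧ p.1 ≤ t.x₂ ∧ t.bot p.1 ≤ p.2 ∧ p.2 ≤ t.top p.1}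

/-- The point set of the upper side of the trapezoid. -/
def topSide (t : Trapezoid) : Set (ℝ × ℝ) :=
  segment ℝ (t.x₁, t.top t.x₁) (t.x₂, t.top t.x₂)

end Trapezoid

open Bornology

lemma compIn_eq_of_mem_closure {U : Set (ℝ × ℝ)} (hU : IsOpen U) {x z : ℝ × ℝ}
    (hz : z ∈ closure (connectedComponentIn U x)) (hzU : z ∈ U) :
    connectedComponentIn U x = connectedComponentIn U z := by
  have hV : IsOpen (connectedComponentIn U z) := hU.connectedComponentIn
  have hzV : z ∈ connectedComponentIn U z := mem_connectedComponentIn hzU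
  obtain ⟨w, hwV, hwx⟩ := mem_closure_iff.mp hz _ hV hzV
  rw [connectedComponentIn_eq hwx, connectedComponentIn_eq hwV]

lemma bounded_compIn_of_mem_fill {K : Set (ℝ × ℝ)} (hK : IsClosed K) {z : ℝ × ℝ}
    (hz : z ∈ fill K) (hzK : z ∉ K) : IsBounded (connectedComponentIn Kᶜ z) := by
  simp only [fill, Set.mem_iUnion, Set.mem_setOf_eq, exists_prop] at hz
  obtain ⟨x, ⟨hxK, hbd⟩, hcl⟩ := hz
  rwa [compIn_eq_of_mem_closure hK.isOpen_compl hcl hzK] at hbd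

lemma mem_compIn_of_mem_closure {K : Set (ℝ × ℝ)} (hK : IsClosed K) {x z : ℝ × ℝ}
    (hz : z ∈ closure (connectedComponentIn Kᶜ x)) (hzK : z ∉ K) :
    z ∈ connectedComponentIn Kᶜ x :=
  (compIn_eq_of_mem_closure hK.isOpen_compl hz hzK) ▸ mem_connectedComponentIn hzK

lemma closure_compIn_subset {K : Set (ℝ × ℝ)} (hK : IsClosed K) (x : ℝ × ℝ) :
    closure (connectedComponentIn Kᶜ x) ⊆ connectedComponentIn Kᶜ x ∪ K := by
  intro z hz
  by_cases hzK : z ∈ K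
  · exact Or.inr hzK
  · exact Or.inl (mem_compIn_of_mem_closure hK hz hzK)

lemma isClosed_of_componentsOf {E K : Set (ℝ × ℝ)} (hE : IsClosed E)
    (hK : K ∈ componentsOf E) : IsClosed K := by
  obtain ⟨x, hx, rfl⟩ := hK
  rw [connectedComponentIn_eq_image hx]
  exact hE.isClosedMap_subtype_val _ isClosed_connectedComponent

lemma not_isBounded_univ : ¬ IsBounded (Set.univ : Set (ℝ × ℝ)) := by
  intro h
  obtain ⟨r, hr⟩ := h.subset_closedBall 0
  have hm := hr (Set.mem_univ ((|r| + 1, 0) : ℝ × ℝ))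
  rw [Metric.mem_closedBall, Prod.dist_eq] at hm
  have h1 : dist (|r| + 1) (0:ℝ) ≤ r := le_trans (le_max_left _ _) hm
  rw [Real.dist_eq, sub_zero, abs_of_nonneg (by positivity)] at h1
  linarith [le_abs_self r]

lemma mem_topSide_of_valid {t : Trapezoid} (ht : t.IsValid) {x : ℝ}
    (h1 : t.x₁ ≤ x) (h2 : x ≤ t.x₂) : (x, t.top x) ∈ t.topSide := by
  obtain ⟨hle, ⟨a, b, hab⟩, -, -⟩ := ht
  rcases eq_or_lt_of_le hle with heq | hlt
  · have hx : x = t.x₁ := le_antisymm (heq ▸ h2) h1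
    subst hx
    exact left_mem_segment ℝ _ _
  · set s : ℝ := (x - t.x₁) / (t.x₂ - t.x₁) with hs
    have hd : (0:ℝ) < t.x₂ - t.x₁ := by linarith
    have hs0 : 0 ≤ s := div_nonneg (by linarith) hd.le
    have hs1 : s ≤ 1 := (div_le_one hd).mpr (by linarith)
    have hkey : s * (t.x₂ - t.x₁) = x - t.x₁ := div_mul_cancel₀ _ hd.ne'
    refine ⟨1 - s, s, by linarith, hs0, by ring, ?_⟩
    have hcoord1 : (1 - s) * t.x₁ + s * t.x₂ = x := by linarith
    have hcoord2 : (1 - s) * t.top t.x₁ + s * t.top t.x₂ = t.top x := by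
      rw [hab, hab, hab]; linear_combination a * hcoord1
    rw [Prod.smul_mk, Prod.smul_mk, Prod.mk_add_mk]
    simp only [smul_eq_mul]
    exact Prod.ext hcoord1 hcoord2

/-- Distinct members of `componentsOf E` are disjoint. -/
lemma componentsOf_disjoint {E γ γ' : Set (ℝ × ℝ)} (hγ : γ ∈ componentsOf E)
    (hγ' : γ' ∈ componentsOf E) (hne : γ ≠ γ') : ∀ z ∈ γ, z ∉ γ' := by
  obtain ⟨x, hx, rfl⟩ := hγ
  obtain ⟨y, hy, rfl⟩ := hγ'
  intro z hz hz'
  exact hne ((connectedComponentIn_eq hz).trans (connectedComponentIn_eq hz').symm)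

/-- Lemma 1 of the paper.  Let `E` be the edge-vertex union of a planar subdivision,
`q ∉ E` a query point with face `F_q = connectedComponentIn Eᶜ q`, whose outer
boundary `B` lies on the component `γq` of `E`.  Let `T` be the cells of the vertical
decompositions of covering families of connected subdivisions: each trapezoid `t ∈ T`
belongs to (has its upper side on an edge of) a component `comp t`, is contained in
`fill (comp t)`, and for every component `γ` the trapezoids belonging to `γ` cover
`fill γ`.  If `F_q` is bounded, then the lowest trapezoid of `T` stabbed by `q`
belongs to an edge of `γq`; if `F_q` is unbounded, no trapezoid of `T` contains `q`. -/
theorem lowest_stabbed_trapezoid_belongs_to_outer_component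
    (E : Set (ℝ × ℝ)) (hE : IsClosed E) (q : ℝ × ℝ) (hq : q ∉ E)
    (B γq : Set (ℝ × ℝ)) (hB : IsOuterBoundary (connectedComponentIn Eᶜ q) B)
    (hγq : γq ∈ componentsOf E) (hBγ : B ⊆ γq)
    (T : Finset Trapezoid) (hval : ∀ t ∈ T, t.IsValid)
    (comp : Trapezoid → Set (ℝ × ℝ))
    (hcomp : ∀ t ∈ T, comp t ∈ componentsOf E)
    (htopOn : ∀ t ∈ T, t.topSide ⊆ comp t)
    (hsub : ∀ t ∈ T, t.carrier ⊆ fill (comp t))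
    (hcover : ∀ γ ∈ componentsOf E, ∀ p ∈ fill γ, ∃ t ∈ T, comp t = γ ∧ p ∈ t.carrier) :
    (Bornology.IsBounded (connectedComponentIn Eᶜ q) →
      ∀ t ∈ T, q ∈ t.carrier →
        (∀ t' ∈ T, q ∈ t'.carrier → t.top q.1 ≤ t'.top q.1) → comp t = γq) ∧
    (¬ Bornology.IsBounded (connectedComponentIn Eᶜ q) → ∀ t ∈ T, q ∉ t.carrier) := by
  have hqE : q ∈ Eᶜ := hq
  -- common facts for any trapezoid containing q
  have key : ∀ t ∈ T, q ∈ t.carrier → IsBounded (connectedComponentIn (comp t)ᶜ q) := by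
    intro t ht hqt
    have hγcl : IsClosed (comp t) := isClosed_of_componentsOf hE (hcomp t ht)
    have hγE : comp t ⊆ E := by
      obtain ⟨x, hx, heq⟩ := hcomp t ht
      exact heq ▸ connectedComponentIn_subset E x
    exact bounded_compIn_of_mem_fill hγcl (hsub t ht hqt) (fun h => hq (hγE h))
  constructor
  · -- bounded case
    intro _ t ht hqt hmin
    by_contra hne
    set γ : Set (ℝ × ℝ) := comp t with hγdef
    have hγmem : γ ∈ componentsOf E := hcomp t ht
    have hγcl : IsClosed γ := isClosed_of_componentsOf hE hγmem
    have hγqcl : IsClosed γq := isClosed_of_componentsOf hE hγq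
    have hγE : γ ⊆ E := by
      obtain ⟨x, hx, heq⟩ := hγmem; exact heq ▸ connectedComponentIn_subset E x
    have hγqE : γq ⊆ E := by
      obtain ⟨x, hx, heq⟩ := hγq; exact heq ▸ connectedComponentIn_subset E x
    have hdisj : ∀ z ∈ γ, z ∉ γq := componentsOf_disjoint hγmem hγq hne
    have hqγ : q ∉ γ := fun h => hq (hγE h)
    have hqγq : q ∉ γq := fun h => hq (hγqE h)
    -- q ∈ fill γq, so there is a trapezoid t' of γq containing q
    have hqBbd : IsBounded (connectedComponentIn Bᶜ q) := hB.2 q (mem_connectedComponentIn hqE)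
    have hqγqbd : IsBounded (connectedComponentIn γqᶜ q) :=
      hqBbd.subset (connectedComponentIn_mono q (Set.compl_subset_compl.mpr hBγ))
    have hqfill : q ∈ fill γq := by
      refine Set.mem_biUnion ⟨hqγq, hqγqbd⟩ (subset_closure (mem_connectedComponentIn hqγq))
    obtain ⟨t', ht', hct', hqt'⟩ := hcover γq hγq q hqfill
    have hmin' : t.top q.1 ≤ t'.top q.1 := hmin t' ht' hqt'
    -- the point p on the top side of t
    set p : ℝ × ℝ := (q.1, t.top q.1) with hpdef
    have hpts : p ∈ t.topSide := mem_topSide_of_valid (hval t ht) hqt.1 hqt.2.1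
    have hpγ : p ∈ γ := htopOn t ht hpts
    have hpγq : p ∉ γq := hdisj p hpγ
    have hpt' : p ∈ t'.carrier :=
      ⟨hqt'.1, hqt'.2.1, le_trans hqt'.2.2.1 hqt.2.2.2, hmin'⟩
    have hpfill : p ∈ fill γq := hct' ▸ hsub t' ht' hpt'
    -- D: bounded face of γq containing p; contains γ
    set D : Set (ℝ × ℝ) := connectedComponentIn γqᶜ p with hDdef
    have hDbd : IsBounded D := bounded_compIn_of_mem_fill hγqcl hpfill hpγq
    have hγconn : IsConnected γ := by
      obtain ⟨x, hx, heq⟩ := hγmem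
      exact heq ▸ (isConnected_connectedComponentIn_iff.mpr hx)
    have hγsub : γ ⊆ γqᶜ := fun z hz => hdisj z hz
    have hγD : γ ⊆ D := hγconn.isPreconnected.subset_connectedComponentIn hpγ hγsub
    -- C: bounded face of γ containing q; contains γq
    set C : Set (ℝ × ℝ) := connectedComponentIn γᶜ q with hCdef
    have hCbd : IsBounded C := key t ht hqt
    have hFqC : connectedComponentIn Eᶜ q ⊆ C :=
      connectedComponentIn_mono q (Set.compl_subset_compl.mpr hγE)
    have hBfr : B ⊆ frontier (connectedComponentIn Eᶜ q) := by
      obtain ⟨x, hx, heq⟩ := hB.1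
      rw [heq]
      exact connectedComponentIn_subset _ x
    have hBC : B ⊆ C := by
      intro b hb
      have hbγq : b ∈ γq := hBγ hb
      have hbγ : b ∉ γ := fun h => hdisj b h hbγq
      have hbcl : b ∈ closure C :=
        closure_mono hFqC (frontier_subset_closure (hBfr hb))
      exact mem_compIn_of_mem_closure hγcl hbcl hbγ
    have hBne : B.Nonempty := by
      obtain ⟨x, hx, heq⟩ := hB.1
      rw [heq]
      exact ⟨x, mem_connectedComponentIn hx⟩
    obtain ⟨b, hbB⟩ := hBne
    have hγqconn : IsConnected γq := by
      obtain ⟨x, hx, heq⟩ := hγq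
      exact heq ▸ (isConnected_connectedComponentIn_iff.mpr hx)
    have hγqsub : γq ⊆ γᶜ := fun z hz h => hdisj z h hz
    have hγqC : γq ⊆ C := by
      have : γq ⊆ connectedComponentIn γᶜ b :=
        hγqconn.isPreconnected.subset_connectedComponentIn (hBγ hbB) hγqsub
      rwa [← connectedComponentIn_eq (hBC hbB)] at this
    -- C ∪ D is a nonempty bounded clopen set: contradiction
    have hCopen : IsOpen C := hγcl.isOpen_compl.connectedComponentIn
    have hDopen : IsOpen D := hγqcl.isOpen_compl.connectedComponentIn
    have hclosed : IsClosed (C ∪ D) := by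
      rw [← closure_subset_iff_isClosed, closure_union]
      refine Set.union_subset ?_ ?_
      · exact (closure_compIn_subset hγcl q).trans
          (Set.union_subset Set.subset_union_left (hγD.trans Set.subset_union_right))
      · exact (closure_compIn_subset hγqcl p).trans
          (Set.union_subset Set.subset_union_right (hγqC.trans Set.subset_union_left))
    have hclopen : IsClopen (C ∪ D) := ⟨hclosed, hCopen.union hDopen⟩
    have huniv : C ∪ D = Set.univ :=
      hclopen.eq_univ ⟨q, Or.inl (mem_connectedComponentIn hqγ)⟩
    exact not_isBounded_univ (huniv ▸ hCbd.union hDbd)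
  · -- unbounded case
    intro hub t ht hqt
    have hγE : comp t ⊆ E := by
      obtain ⟨x, hx, heq⟩ := hcomp t ht
      exact heq ▸ connectedComponentIn_subset E x
    exact hub ((key t ht hqt).subset
      (connectedComponentIn_mono q (Set.compl_subset_compl.mpr hγE)))
end

section
/- If γ is a connected planar graph embedding, γ' a point (new vertex) or a segment e with exactly one endpoint on γ and otherwise disjoint from γ, then attaching e to γ creates no new bounded face: the subdivisions induced by γ and by γ ∪ e have the same set of bounded faces, and the boundary of U(γ ∪ e) equals the boundary of U(γ). -/
open Set Metric

noncomputable def Tf (a u w : ℝ × ℝ) : ℝ := (w.1 - a.1) * u.1 + (w.2 - a.2) * u.2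
noncomputable def Nf (a u w : ℝ × ℝ) : ℝ := (w.2 - a.2) * u.1 - (w.1 - a.1) * u.2

lemma Tf_cont (a u : ℝ × ℝ) : Continuous (Tf a u) := by unfold Tf; fun_prop
lemma Nf_cont (a u : ℝ × ℝ) : Continuous (Nf a u) := by unfold Nf; fun_prop

lemma affine_comb (f : ℝ × ℝ → ℝ)
    (hf : ∀ x y : ℝ × ℝ, ∀ θ : ℝ, f (θ • x + (1-θ) • y) = θ * f x + (1-θ) * f y) :
    Convex ℝ {w | 0 < f w} := by
  intro x hx y hy p q hp hq hpq
  have hq' : q = 1 - p := by linarith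
  subst hq'
  have := hf x y p
  simp only [mem_setOf_eq] at hx hy ⊢
  rw [this]
  rcases eq_or_lt_of_le hp with h | h
  · simp [← h]; linarith
  · nlinarith

lemma Nf_affine (a u : ℝ × ℝ) : ∀ x y : ℝ × ℝ, ∀ θ : ℝ,
    Nf a u (θ • x + (1-θ) • y) = θ * Nf a u x + (1-θ) * Nf a u y := by
  intro x y θ
  simp only [Nf, Prod.fst_add, Prod.snd_add, Prod.smul_fst, Prod.smul_snd, smul_eq_mul]
  ring

lemma Tf_affine (a u : ℝ × ℝ) : ∀ x y : ℝ × ℝ, ∀ θ : ℝ,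
    Tf a u (θ • x + (1-θ) • y) = θ * Tf a u x + (1-θ) * Tf a u y := by
  intro x y θ
  simp only [Tf, Prod.fst_add, Prod.snd_add, Prod.smul_fst, Prod.smul_snd, smul_eq_mul]
  ring

lemma convex_P (a u : ℝ × ℝ) : Convex ℝ {w | 0 < Nf a u w} := affine_comb _ (Nf_affine a u)
lemma convex_M (a u : ℝ × ℝ) : Convex ℝ {w | Nf a u w < 0} := by
  have := affine_comb (fun w => - Nf a u w) (by intro x y θ; simp [Nf_affine a u x y θ]; ring)
  simpa [neg_pos] using this
lemma convex_Q (a u : ℝ × ℝ) : Convex ℝ {w | Tf a u w < 0} := by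
  have := affine_comb (fun w => - Tf a u w) (by intro x y θ; simp [Tf_affine a u x y θ]; ring)
  simpa [neg_pos] using this

lemma open_P (a u : ℝ × ℝ) : IsOpen {w | 0 < Nf a u w} := isOpen_lt continuous_const (Nf_cont a u)
lemma open_M (a u : ℝ × ℝ) : IsOpen {w | Nf a u w < 0} := isOpen_lt (Nf_cont a u) continuous_const
lemma open_Q (a u : ℝ × ℝ) : IsOpen {w | Tf a u w < 0} := isOpen_lt (Tf_cont a u) continuous_const

lemma abs_fst_le (w y : ℝ × ℝ) : |w.1 - y.1| ≤ dist w y := by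
  rw [Prod.dist_eq, Real.dist_eq]; exact le_max_left _ _
lemma abs_snd_le (w y : ℝ × ℝ) : |w.2 - y.2| ≤ dist w y := by
  rw [Prod.dist_eq, Real.dist_eq]; exact le_max_right _ _

lemma Tf_lip (a u w y : ℝ × ℝ) : |Tf a u w - Tf a u y| ≤ (|u.1| + |u.2|) * dist w y := by
  have h1 := abs_fst_le w y
  have h2 := abs_snd_le w y
  have e : Tf a u w - Tf a u y = (w.1 - y.1) * u.1 + (w.2 - y.2) * u.2 := by unfold Tf; ring
  rw [e]
  calc |(w.1 - y.1) * u.1 + (w.2 - y.2) * u.2| ≤ |(w.1 - y.1) * u.1| + |(w.2 - y.2) * u.2| :=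
        abs_add_le _ _
    _ = |w.1 - y.1| * |u.1| + |w.2 - y.2| * |u.2| := by rw [abs_mul, abs_mul]
    _ ≤ (|u.1| + |u.2|) * dist w y := by
        have := abs_nonneg u.1; have := abs_nonneg u.2; nlinarith

lemma line_rep (a u w : ℝ × ℝ) (hK : u.1^2 + u.2^2 ≠ 0) (hN : Nf a u w = 0) :
    w = a + (Tf a u w / (u.1^2 + u.2^2)) • u := by
  unfold Nf at hN
  unfold Tf
  have h1 : w.1 = a.1 + ((w.1 - a.1) * u.1 + (w.2 - a.2) * u.2) / (u.1^2 + u.2^2) * u.1 := by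
    field_simp; linear_combination (-u.2) * hN
  have h2 : w.2 = a.2 + ((w.1 - a.1) * u.1 + (w.2 - a.2) * u.2) / (u.1^2 + u.2^2) * u.2 := by
    field_simp; linear_combination u.1 * hN
  ext
  · simpa using h1
  · simpa using h2

lemma Tf_param (a u : ℝ × ℝ) (θ : ℝ) : Tf a u (a + θ • u) = θ * (u.1^2 + u.2^2) := by
  simp only [Tf, Prod.fst_add, Prod.snd_add, Prod.smul_fst, Prod.smul_snd, smul_eq_mul]
  ring

lemma Nf_param (a u : ℝ × ℝ) (θ : ℝ) : Nf a u (a + θ • u) = 0 := by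
  simp only [Nf, Prod.fst_add, Prod.snd_add, Prod.smul_fst, Prod.smul_snd, smul_eq_mul]
  ring

lemma mem_segment_iff (a b w : ℝ × ℝ) (hab : a ≠ b) :
    w ∈ segment ℝ a b ↔ Nf a (b-a) w = 0 ∧ 0 ≤ Tf a (b-a) w ∧
      Tf a (b-a) w ≤ (b-a).1^2 + (b-a).2^2 := by
  have hK : (b-a).1^2 + (b-a).2^2 ≠ 0 := by
    intro h
    apply hab
    have h1 : (b-a).1 = 0 := by nlinarith [sq_nonneg (b-a).1, sq_nonneg (b-a).2]
    have h2 : (b-a).2 = 0 := by nlinarith [sq_nonneg (b-a).1, sq_nonneg (b-a).2]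
    have : b - a = 0 := Prod.ext h1 h2
    have := sub_eq_zero.mp this
    exact this.symm
  have hKpos : 0 < (b-a).1^2 + (b-a).2^2 := by
    rcases lt_or_eq_of_le (by positivity : (0:ℝ) ≤ (b-a).1^2 + (b-a).2^2) with h | h
    · exact h
    · exact absurd h.symm hK
  constructor
  · intro hw
    rw [segment_eq_image'] at hw
    obtain ⟨θ, hθ, rfl⟩ := hw
    refine ⟨Nf_param a (b-a) θ, ?_, ?_⟩
    · rw [Tf_param]; exact mul_nonneg hθ.1 hKpos.le
    · rw [Tf_param]; nlinarith [hθ.2]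
  · rintro ⟨hN, h0, h1⟩
    rw [segment_eq_image']
    refine ⟨Tf a (b-a) w / ((b-a).1^2 + (b-a).2^2), ⟨?_, ?_⟩, ?_⟩
    · positivity
    · rw [div_le_one hKpos]; exact h1
    · exact (line_rep a (b-a) w hK hN).symm

lemma K_pos {a b : ℝ × ℝ} (hab : a ≠ b) : 0 < (b-a).1^2 + (b-a).2^2 := by
  rcases lt_or_eq_of_le (by positivity : (0:ℝ) ≤ (b-a).1^2 + (b-a).2^2) with h | h
  · exact h
  · exfalso; apply hab
    have h1 : (b-a).1 = 0 := by nlinarith [sq_nonneg (b-a).1, sq_nonneg (b-a).2]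
    have h2 : (b-a).2 = 0 := by nlinarith [sq_nonneg (b-a).1, sq_nonneg (b-a).2]
    have : b - a = 0 := Prod.ext h1 h2
    exact (sub_eq_zero.mp this).symm

lemma dist_add_smul (z p : ℝ × ℝ) (t : ℝ) : dist (z + t • p) z ≤ |t| * (|p.1| + |p.2|) := by
  rw [Prod.dist_eq]
  apply max_le
  · rw [Real.dist_eq]
    simp only [Prod.fst_add, Prod.smul_fst, smul_eq_mul, add_sub_cancel_left, abs_mul]
    nlinarith [abs_nonneg t, abs_nonneg p.1, abs_nonneg p.2]
  · rw [Real.dist_eq]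
    simp only [Prod.snd_add, Prod.smul_snd, smul_eq_mul, add_sub_cancel_left, abs_mul]
    nlinarith [abs_nonneg t, abs_nonneg p.1, abs_nonneg p.2]

lemma Nf_shift (a u z : ℝ × ℝ) (t : ℝ) :
    Nf a u (z + t • ((-u.2, u.1) : ℝ × ℝ)) = Nf a u z + t * (u.1^2 + u.2^2) := by
  simp only [Nf, Prod.fst_add, Prod.snd_add, Prod.smul_fst, Prod.smul_snd, smul_eq_mul]
  ring


lemma Nf_shift' (a u z : ℝ × ℝ) (t : ℝ) :
    Nf a u (z + t • ((u.2, -u.1) : ℝ × ℝ)) = Nf a u z - t * (u.1^2 + u.2^2) := by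
  simp only [Nf, Prod.fst_add, Prod.snd_add, Prod.smul_fst, Prod.smul_snd, smul_eq_mul]
  ring

lemma Tf_at (a u p : ℝ × ℝ) (t : ℝ) :
    Tf a u (a + t • p) = t * (p.1 * u.1 + p.2 * u.2) := by
  simp only [Tf, Prod.fst_add, Prod.snd_add, Prod.smul_fst, Prod.smul_snd, smul_eq_mul]
  ring

lemma Nf_at (a u p : ℝ × ℝ) (t : ℝ) :
    Nf a u (a + t • p) = t * (p.2 * u.1 - p.1 * u.2) := by
  simp only [Nf, Prod.fst_add, Prod.snd_add, Prod.smul_fst, Prod.smul_snd, smul_eq_mul]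
  ring

lemma seg'_eq {a b : ℝ × ℝ} (hab : a ≠ b) :
    segment ℝ a b \ {b} = (fun θ : ℝ => a + θ • (b - a)) '' Ico 0 1 := by
  have hdu : b - a ≠ 0 := sub_ne_zero_of_ne (Ne.symm hab)
  ext w
  simp only [mem_diff, mem_singleton_iff, segment_eq_image', mem_image, mem_Icc, mem_Ico]
  constructor
  · rintro ⟨⟨θ, ⟨h0, h1⟩, rfl⟩, hne⟩
    refine ⟨θ, ⟨h0, lt_of_le_of_ne h1 ?_⟩, rfl⟩
    intro h; subst h; apply hne; simp
  · rintro ⟨θ, ⟨h0, h1⟩, rfl⟩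
    refine ⟨⟨θ, ⟨h0, h1.le⟩, rfl⟩, ?_⟩
    intro h
    have h2 : (θ - 1) • (b - a) = 0 := by
      rw [sub_smul, one_smul, sub_eq_zero, eq_sub_iff_add_eq, add_comm]
      exact h
    rcases smul_eq_zero.mp h2 with h' | h'
    · linarith [sub_eq_zero.mp h']
    · exact hdu h'

lemma segment_isCompact (a b : ℝ × ℝ) : IsCompact (segment ℝ a b) := by
  rw [segment_eq_image']
  exact isCompact_Icc.image (by fun_prop)

lemma seg'_preconnected {a b : ℝ × ℝ} (hab : a ≠ b) :
    IsPreconnected (segment ℝ a b \ {b}) := by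
  rw [seg'_eq hab]
  exact isPreconnected_Ico.image _ (by fun_prop : Continuous fun θ : ℝ => a + θ • (b-a)).continuousOn


lemma near_plus (a u z : ℝ × ℝ) (hK : 0 < u.1^2 + u.2^2) (hz : Nf a u z = 0)
    (r : ℝ) (hr : 0 < r) : ∃ w ∈ ball z r, 0 < Nf a u w := by
  set Cc := |u.1| + |u.2| with hCc
  have hC0 : 0 ≤ Cc := by positivity
  refine ⟨z + (r/(2*(Cc+1))) • ((-u.2, u.1) : ℝ × ℝ), ?_, ?_⟩
  · rw [mem_ball]
    have h1 := dist_add_smul z ((-u.2, u.1) : ℝ × ℝ) (r/(2*(Cc+1)))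
    have h2 : |r/(2*(Cc+1))| = r/(2*(Cc+1)) := abs_of_pos (by positivity)
    have h3 : |(((-u.2, u.1)) : ℝ × ℝ).1| + |(((-u.2, u.1)) : ℝ × ℝ).2| = Cc := by
      simp [hCc, abs_neg]; ring
    rw [h2, h3] at h1
    have h4 : r/(2*(Cc+1)) * Cc < r := by
      rw [div_mul_eq_mul_div, div_lt_iff₀ (by positivity)]
      nlinarith
    exact lt_of_le_of_lt h1 h4
  · rw [Nf_shift, hz, zero_add]
    positivity

lemma near_minus (a u z : ℝ × ℝ) (hK : 0 < u.1^2 + u.2^2) (hz : Nf a u z = 0)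
    (r : ℝ) (hr : 0 < r) : ∃ w ∈ ball z r, Nf a u w < 0 := by
  set Cc := |u.1| + |u.2| with hCc
  have hC0 : 0 ≤ Cc := by positivity
  refine ⟨z + (r/(2*(Cc+1))) • ((u.2, -u.1) : ℝ × ℝ), ?_, ?_⟩
  · rw [mem_ball]
    have h1 := dist_add_smul z ((u.2, -u.1) : ℝ × ℝ) (r/(2*(Cc+1)))
    have h2 : |r/(2*(Cc+1))| = r/(2*(Cc+1)) := abs_of_pos (by positivity)
    have h3 : |(((u.2, -u.1)) : ℝ × ℝ).1| + |(((u.2, -u.1)) : ℝ × ℝ).2| = Cc := by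
      simp [hCc, abs_neg]; ring
    rw [h2, h3] at h1
    have h4 : r/(2*(Cc+1)) * Cc < r := by
      rw [div_mul_eq_mul_div, div_lt_iff₀ (by positivity)]
      nlinarith
    exact lt_of_le_of_lt h1 h4
  · rw [Nf_shift', hz, zero_sub]
    have : 0 < (r/(2*(Cc+1))) * (u.1^2+u.2^2) := by positivity
    linarith

lemma engine (a b : ℝ × ℝ) (hab : a ≠ b) (U u v : Set (ℝ × ℝ))
    (hUo : IsOpen U) (hUc : IsPreconnected U) (hbU : b ∉ U)
    (hsegU : segment ℝ a b \ {b} ⊆ U)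
    (huo : IsOpen u) (hvo : IsOpen v)
    (hcov : U \ segment ℝ a b ⊆ u ∪ v)
    (hsep : ∀ w, w ∈ U \ segment ℝ a b → w ∈ u → w ∈ v → False)
    (hune : ((U \ segment ℝ a b) ∩ u).Nonempty)
    (hvne : ((U \ segment ℝ a b) ∩ v).Nonempty)
    (htip : ∃ rt > 0, rt * (|(b-a).1| + |(b-a).2|) < (b-a).1^2 + (b-a).2^2 ∧
      ball a rt ⊆ U ∧
      ball a rt ∩ ({w | 0 < Nf a (b-a) w} ∪ {w | Nf a (b-a) w < 0} ∪ {w | Tf a (b-a) w < 0})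
        ⊆ u) :
    False := by
  obtain ⟨rt, hrt, hrtC, hballt, htipu⟩ := htip
  set du := b - a with hdu
  set Kc := du.1^2 + du.2^2 with hKc
  set Cc := |du.1| + |du.2| with hCc
  have hK0 : 0 < Kc := K_pos hab
  have hC0 : 0 ≤ Cc := by positivity
  set V := U \ segment ℝ a b with hV
  have hmem : ∀ w, w ∈ segment ℝ a b ↔ Nf a du w = 0 ∧ 0 ≤ Tf a du w ∧ Tf a du w ≤ Kc :=
    fun w => mem_segment_iff a b w hab
  -- dichotomy for preconnected subsets of V
  have dich : ∀ S : Set (ℝ × ℝ), S ⊆ V → IsPreconnected S → S.Nonempty → S ⊆ u ∨ S ⊆ v := by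
    intro S hSV hSp hSne
    by_contra hcon
    push_neg at hcon
    obtain ⟨hnu, hnv⟩ := hcon
    obtain ⟨x, hxS, hxu⟩ := not_subset.mp hnu
    obtain ⟨y, hyS, hyv⟩ := not_subset.mp hnv
    have hxv : x ∈ v := (hcov (hSV hxS)).resolve_left hxu
    have hyu : y ∈ u := (hcov (hSV hyS)).resolve_right hyv
    obtain ⟨w, hwS, hwuv⟩ := hSp u v huo hvo (hSV.trans hcov) ⟨y, hyS, hyu⟩ ⟨x, hxS, hxv⟩
    exact hsep w (hSV hwS) hwuv.1 hwuv.2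
  have ha_seg : a ∈ segment ℝ a b \ {b} := ⟨left_mem_segment ℝ a b, hab⟩
  -- the one-sided walls lemma
  have main_side : ∀ X : Set (ℝ × ℝ), Convex ℝ X →
      (∀ w ∈ X, w ∉ segment ℝ a b) →
      (∀ z : ℝ × ℝ, Nf a du z = 0 → ∀ r, 0 < r → (ball z r ∩ X).Nonempty) →
      X ⊆ ({w | 0 < Nf a du w} ∪ {w | Nf a du w < 0} ∪ {w | Tf a du w < 0}) →
      ∀ z ∈ segment ℝ a b \ {b}, ∃ r > 0, ball z r ⊆ U ∧ ball z r ∩ X ⊆ u := by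
    intro X hXc hXseg hXnear hXsub
    have hopen : ∀ s : Set (ℝ × ℝ),
        IsOpen {z : ℝ × ℝ | ∃ r > 0, ball z r ⊆ U ∧ ball z r ∩ X ⊆ s} := by
      intro s
      rw [Metric.isOpen_iff]
      rintro z ⟨r, hr, hU', hs'⟩
      refine ⟨r/2, by linarith, ?_⟩
      intro z' hz'
      have hsub : ball z' (r/2) ⊆ ball z r :=
        ball_subset_ball' (by have := mem_ball.mp hz'; linarith)
      exact ⟨r/2, by linarith, hsub.trans hU', fun w hw => hs' ⟨hsub hw.1, hw.2⟩⟩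
    set WXu := {z : ℝ × ℝ | ∃ r > 0, ball z r ⊆ U ∧ ball z r ∩ X ⊆ u} with hWXu
    set WXv := {z : ℝ × ℝ | ∃ r > 0, ball z r ⊆ U ∧ ball z r ∩ X ⊆ v} with hWXv
    have hcov' : segment ℝ a b \ {b} ⊆ WXu ∪ WXv := by
      intro z hz
      obtain ⟨r, hr, hrU⟩ := Metric.isOpen_iff.mp hUo z (hsegU hz)
      have hNz : Nf a du z = 0 := ((hmem z).mp hz.1).1
      have hSV : ball z r ∩ X ⊆ V := fun w hw => ⟨hrU hw.1, hXseg w hw.2⟩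
      have hSpre : IsPreconnected (ball z r ∩ X) :=
        ((convex_ball z r).inter hXc).isPreconnected
      rcases dich _ hSV hSpre (hXnear z hNz r hr) with h | h
      · exact Or.inl ⟨r, hr, hrU, h⟩
      · exact Or.inr ⟨r, hr, hrU, h⟩
    have hdisj : ∀ z ∈ segment ℝ a b \ {b}, z ∈ WXu → z ∈ WXv → False := by
      rintro z hz ⟨r1, hr1, hU1, hu1⟩ ⟨r2, hr2, hU2, hv1⟩
      have hNz : Nf a du z = 0 := ((hmem z).mp hz.1).1
      obtain ⟨w, hwb, hwX⟩ := hXnear z hNz (min r1 r2) (lt_min hr1 hr2)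
      exact hsep w ⟨hU1 (ball_subset_ball (min_le_left _ _) hwb), hXseg w hwX⟩
        (hu1 ⟨ball_subset_ball (min_le_left _ _) hwb, hwX⟩)
        (hv1 ⟨ball_subset_ball (min_le_right _ _) hwb, hwX⟩)
    have ha_Wu : a ∈ WXu :=
      ⟨rt, hrt, hballt, fun w hw => htipu ⟨hw.1, hXsub hw.2⟩⟩
    have hall : segment ℝ a b \ {b} ⊆ WXu := by
      by_contra hcon
      obtain ⟨z, hz, hzWu⟩ := not_subset.mp hcon
      obtain ⟨y, hy, hyuv⟩ := seg'_preconnected hab WXu WXv (hopen u) (hopen v) hcov'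
        ⟨a, ha_seg, ha_Wu⟩ ⟨z, hz, (hcov' hz).resolve_left hzWu⟩
      exact hdisj y hy hyuv.1 hyuv.2
    exact fun z hz => hall hz
  -- apply to both half-planes
  have hside_P := main_side {w | 0 < Nf a du w} (convex_P a du)
    (fun w hw hseg => by
      have := ((hmem w).mp hseg).1
      simp only [mem_setOf_eq] at hw; linarith)
    (fun z hz r hr => by
      obtain ⟨w, hwb, hwP⟩ := near_plus a du z hK0 hz r hr
      exact ⟨w, hwb, hwP⟩)
    (fun w hw => mem_union_left _ (mem_union_left _ hw))
  have hside_M := main_side {w | Nf a du w < 0} (convex_M a du)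
    (fun w hw hseg => by
      have := ((hmem w).mp hseg).1
      simp only [mem_setOf_eq] at hw; linarith)
    (fun z hz r hr => by
      obtain ⟨w, hwb, hwM⟩ := near_minus a du z hK0 hz r hr
      exact ⟨w, hwb, hwM⟩)
    (fun w hw => mem_union_left _ (mem_union_right _ hw))
  -- key: near every point of the open segment, V-points lie in u
  have key : ∀ y ∈ segment ℝ a b \ {b}, ∃ r > 0, ∀ w ∈ ball y r, w ∈ V → w ∈ u := by
    intro y hy
    obtain ⟨r1, hr1, hU1, hu1⟩ := hside_P y hy
    obtain ⟨r2, hr2, hU2, hu2⟩ := hside_M y hy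
    have hy' := hy
    rw [seg'_eq hab] at hy'
    obtain ⟨s, ⟨hs0, hs1⟩, hys⟩ := hy'
    rcases eq_or_lt_of_le hs0 with hs0' | hs0'
    · -- tip case : y = a
      have hya : y = a := by rw [← hys, ← hs0']; simp
      refine ⟨min (min r1 r2) rt, by positivity, ?_⟩
      intro w hwb hwV
      have hwb1 : w ∈ ball y r1 := ball_subset_ball ((min_le_left _ _).trans (min_le_left _ _)) hwb
      have hwb2 : w ∈ ball y r2 := ball_subset_ball ((min_le_left _ _).trans (min_le_right _ _)) hwb
      have hwbt : w ∈ ball a rt := by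
        rw [← hya]; exact ball_subset_ball (min_le_right _ _) hwb
      rcases lt_trichotomy (Nf a du w) 0 with hN | hN | hN
      · exact hu2 ⟨hwb2, hN⟩
      · have hnot : ¬(0 ≤ Tf a du w ∧ Tf a du w ≤ Kc) := by
          intro hc
          exact hwV.2 ((hmem w).mpr ⟨hN, hc.1, hc.2⟩)
        rcases not_and_or.mp hnot with hT | hT
        · push_neg at hT
          exact htipu ⟨hwbt, mem_union_right _ hT⟩
        · push_neg at hT
          exfalso
          have habs := Tf_lip a du w a
          have hTa : Tf a du a = 0 := by simp [Tf]
          rw [hTa, sub_zero] at habs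
          have hd : dist w a < rt := mem_ball.mp hwbt
          have h5 := le_abs_self (Tf a du w)
          nlinarith [mul_le_mul_of_nonneg_left hd.le hC0]
      · exact hu1 ⟨hwb1, hN⟩
    · -- interior case : 0 < s < 1
      have hs1' : 0 < 1 - s := by linarith
      refine ⟨min (min r1 r2) (min (s*Kc/(Cc+1)) ((1-s)*Kc/(Cc+1))), by positivity, ?_⟩
      intro w hwb hwV
      have hwb1 : w ∈ ball y r1 := ball_subset_ball ((min_le_left _ _).trans (min_le_left _ _)) hwb
      have hwb2 : w ∈ ball y r2 := ball_subset_ball ((min_le_left _ _).trans (min_le_right _ _)) hwb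
      rcases lt_trichotomy (Nf a du w) 0 with hN | hN | hN
      · exact hu2 ⟨hwb2, hN⟩
      · exfalso
        have habs := Tf_lip a du w y
        have hTy : Tf a du y = s * Kc := by
          rw [← hys, Tf_at, hKc]; ring
        have hd1 : dist w y < s*Kc/(Cc+1) :=
          lt_of_lt_of_le (mem_ball.mp hwb)
            ((min_le_right _ _).trans (min_le_left _ _))
        have hd2 : dist w y < (1-s)*Kc/(Cc+1) :=
          lt_of_lt_of_le (mem_ball.mp hwb)
            ((min_le_right _ _).trans (min_le_right _ _))
        have he1 : dist w y * (Cc+1) < s*Kc := by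
          rw [← div_mul_cancel₀ (s*Kc) (show (Cc:ℝ)+1 ≠ 0 by positivity)]
          exact mul_lt_mul_of_pos_right hd1 (by positivity)
        have he2 : dist w y * (Cc+1) < (1-s)*Kc := by
          rw [← div_mul_cancel₀ ((1-s)*Kc) (show (Cc:ℝ)+1 ≠ 0 by positivity)]
          exact mul_lt_mul_of_pos_right hd2 (by positivity)
        have h5 := le_abs_self (Tf a du w - Tf a du y)
        have h6 := neg_abs_le (Tf a du w - Tf a du y)
        have hdn := dist_nonneg (x := w) (y := y)
        have h0T : 0 < Tf a du w := by nlinarith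
        have hKT : Tf a du w < Kc := by nlinarith
        exact hwV.2 ((hmem w).mpr ⟨hN, h0T.le, hKT.le⟩)
      · exact hu1 ⟨hwb1, hN⟩
  -- the closure claim
  have claim : ∀ y ∈ U, y ∈ closure (V ∩ v) → y ∈ V ∩ v := by
    intro y hyU hycl
    by_cases hyseg : y ∈ segment ℝ a b
    · exfalso
      have hy' : y ∈ segment ℝ a b \ {b} := ⟨hyseg, fun h => hbU (by rwa [mem_singleton_iff.mp h] at hyU)⟩
      obtain ⟨r, hr, hru⟩ := key y hy'
      obtain ⟨w, hwb, hwVv⟩ := mem_closure_iff.mp hycl (ball y r) isOpen_ball (mem_ball_self hr)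
      exact hsep w hwVv.1 (hru w hwb hwVv.1) hwVv.2
    · have hyV : y ∈ V := ⟨hyU, hyseg⟩
      rcases hcov hyV with hyu | hyv
      · obtain ⟨w, hwu, hwVv⟩ := mem_closure_iff.mp hycl u huo hyu
        exact (hsep w hwVv.1 hwu hwVv.2).elim
      · exact ⟨hyV, hyv⟩
  -- final contradiction via preconnectedness of U
  have hsegcl : IsClosed (segment ℝ a b) := (segment_isCompact a b).isClosed
  obtain ⟨xu, hxuV, hxuu⟩ := hune
  obtain ⟨xv, hxvV, hxvv⟩ := hvne
  have hO1 : IsOpen (closure (V ∩ v))ᶜ := isClosed_closure.isOpen_compl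
  have hO2 : IsOpen (v ∩ (segment ℝ a b)ᶜ) := hvo.inter hsegcl.isOpen_compl
  have hcov2 : U ⊆ (closure (V ∩ v))ᶜ ∪ (v ∩ (segment ℝ a b)ᶜ) := by
    intro y hyU
    by_cases h : y ∈ closure (V ∩ v)
    · have := claim y hyU h
      exact Or.inr ⟨this.2, this.1.2⟩
    · exact Or.inl h
  have hne1 : (U ∩ (closure (V ∩ v))ᶜ).Nonempty := by
    refine ⟨xu, hxuV.1, fun h => ?_⟩
    have := claim xu hxuV.1 h
    exact hsep xu hxuV hxuu this.2
  have hne2 : (U ∩ (v ∩ (segment ℝ a b)ᶜ)).Nonempty := ⟨xv, hxvV.1, hxvv, hxvV.2⟩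
  obtain ⟨y, hyU, hy1, hy2⟩ := hUc _ _ hO1 hO2 hcov2 hne1 hne2
  exact hy1 (subset_closure ⟨⟨hyU, hy2.2⟩, hy2.1⟩)

lemma lemA (a b : ℝ × ℝ) (U : Set (ℝ × ℝ)) (hUo : IsOpen U) (hUc : IsPreconnected U)
    (hbU : b ∉ U) (hsegU : segment ℝ a b \ {b} ⊆ U) :
    IsPreconnected (U \ segment ℝ a b) := by
  rcases eq_or_ne a b with rfl | hab
  · rw [segment_same]
    have : U \ {a} = U := diff_singleton_eq_self hbU
    rw [this]
    exact hUc
  · intro u v huo hvo hcov hune hvne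
    by_contra hne
    have hsep : ∀ w, w ∈ U \ segment ℝ a b → w ∈ u → w ∈ v → False := by
      intro w hw hwu hwv
      exact hne ⟨w, hw, hwu, hwv⟩
    set du := b - a with hdu
    set Kc := du.1^2 + du.2^2 with hKc
    set Cc := |du.1| + |du.2| with hCc
    have hK0 : 0 < Kc := K_pos hab
    have hC0 : 0 ≤ Cc := by positivity
    have haU : a ∈ U := hsegU ⟨left_mem_segment ℝ a b, hab⟩
    obtain ⟨r0, hr0, hr0U⟩ := Metric.isOpen_iff.mp hUo a haU
    set rt := min r0 (Kc/(2*(Cc+1))) with hrt_def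
    have hrt : 0 < rt := lt_min hr0 (by positivity)
    have hrtC : rt * Cc < Kc := by
      have h1 : rt ≤ Kc/(2*(Cc+1)) := min_le_right _ _
      have h2 : rt * Cc ≤ Kc/(2*(Cc+1)) * Cc := by
        apply mul_le_mul_of_nonneg_right h1 hC0
      have h3 : Kc/(2*(Cc+1)) * Cc < Kc := by
        rw [div_mul_eq_mul_div, div_lt_iff₀ (by positivity)]
        nlinarith
      exact lt_of_le_of_lt h2 h3
    have hballt : ball a rt ⊆ U := (ball_subset_ball (min_le_left _ _)).trans hr0U
    -- the tip set Y
    set P := {w : ℝ × ℝ | 0 < Nf a du w} with hP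
    set M := {w : ℝ × ℝ | Nf a du w < 0} with hM
    set Q := {w : ℝ × ℝ | Tf a du w < 0} with hQ
    set Y := ball a rt ∩ (P ∪ M ∪ Q) with hY
    -- witness points
    set ε := rt / (2*(2*Cc+1)) with hε
    have hε0 : 0 < ε := by positivity
    have hball_pt : ∀ p : ℝ × ℝ, |p.1| + |p.2| ≤ 2*Cc → a + ε • p ∈ ball a rt := by
      intro p hp
      rw [mem_ball]
      have h1 := dist_add_smul a p ε
      have h2 : |ε| = ε := abs_of_pos hε0
      rw [h2] at h1
      have h3 : ε * (|p.1| + |p.2|) ≤ ε * (2*Cc) :=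
        mul_le_mul_of_nonneg_left hp hε0.le
      have h4 : ε * (2*Cc) < rt := by
        rw [hε, div_mul_eq_mul_div, div_lt_iff₀ (by positivity)]
        nlinarith
      linarith
    set wp := a + ε • ((-du.1 - du.2, du.1 - du.2) : ℝ × ℝ) with hwp
    set wm := a + ε • ((-du.1 + du.2, -du.1 - du.2) : ℝ × ℝ) with hwm
    have hb1 : |(-du.1 - du.2 : ℝ)| ≤ Cc := by
      have he : (-du.1 - du.2 : ℝ) = -(du.1 + du.2) := by ring
      rw [he, abs_neg, hCc]; exact abs_add_le _ _
    have hb2 : |(du.1 - du.2 : ℝ)| ≤ Cc := by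
      rw [hCc]; exact abs_sub _ _
    have hb3 : |(-du.1 + du.2 : ℝ)| ≤ Cc := by
      have he : (-du.1 + du.2 : ℝ) = -(du.1 - du.2) := by ring
      rw [he, abs_neg, hCc]; exact abs_sub _ _
    have hwp_ball : wp ∈ ball a rt := by
      apply hball_pt
      show |(-du.1 - du.2 : ℝ)| + |(du.1 - du.2 : ℝ)| ≤ 2*Cc
      linarith
    have hwm_ball : wm ∈ ball a rt := by
      apply hball_pt
      show |(-du.1 + du.2 : ℝ)| + |(-du.1 - du.2 : ℝ)| ≤ 2*Cc
      linarith
    have hwp_T : Tf a du wp < 0 := by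
      rw [hwp, Tf_at]
      have : (-du.1 - du.2) * du.1 + (du.1 - du.2) * du.2 = -Kc := by rw [hKc]; ring
      rw [this]
      nlinarith
    have hwp_N : 0 < Nf a du wp := by
      rw [hwp, Nf_at]
      have : (du.1 - du.2) * du.1 - (-du.1 - du.2) * du.2 = Kc := by rw [hKc]; ring
      rw [this]
      positivity
    have hwm_T : Tf a du wm < 0 := by
      rw [hwm, Tf_at]
      have : (-du.1 + du.2) * du.1 + (-du.1 - du.2) * du.2 = -Kc := by rw [hKc]; ring
      rw [this]
      nlinarith
    have hwm_N : Nf a du wm < 0 := by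
      rw [hwm, Nf_at]
      have : (-du.1 - du.2) * du.1 - (-du.1 + du.2) * du.2 = -Kc := by rw [hKc]; ring
      rw [this]
      nlinarith
    -- Y is preconnected
    have hYeq : Y = ((ball a rt ∩ Q) ∪ (ball a rt ∩ P)) ∪ (ball a rt ∩ M) := by
      rw [hY]
      rw [inter_union_distrib_left, inter_union_distrib_left]
      ac_rfl
    have hA1 : IsPreconnected (ball a rt ∩ Q) :=
      ((convex_ball a rt).inter (convex_Q a du)).isPreconnected
    have hA2 : IsPreconnected (ball a rt ∩ P) :=
      ((convex_ball a rt).inter (convex_P a du)).isPreconnected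
    have hA3 : IsPreconnected (ball a rt ∩ M) :=
      ((convex_ball a rt).inter (convex_M a du)).isPreconnected
    have hY12 : IsPreconnected ((ball a rt ∩ Q) ∪ (ball a rt ∩ P)) :=
      IsPreconnected.union wp ⟨hwp_ball, hwp_T⟩ ⟨hwp_ball, hwp_N⟩ hA1 hA2
    have hYpre : IsPreconnected Y := by
      rw [hYeq]
      exact IsPreconnected.union wm (Or.inl ⟨hwm_ball, hwm_T⟩) ⟨hwm_ball, hwm_N⟩ hY12 hA3
    have hmem : ∀ w, w ∈ segment ℝ a b ↔ Nf a du w = 0 ∧ 0 ≤ Tf a du w ∧ Tf a du w ≤ Kc :=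
      fun w => mem_segment_iff a b w hab
    have hYV : Y ⊆ U \ segment ℝ a b := by
      rintro w ⟨hwb, hwpmq⟩
      refine ⟨hballt hwb, fun hseg => ?_⟩
      obtain ⟨hN, hT0, hTK⟩ := (hmem w).mp hseg
      rcases hwpmq with (hw | hw) | hw
      · rw [hP, mem_setOf_eq] at hw; linarith
      · rw [hM, mem_setOf_eq] at hw; linarith
      · rw [hQ, mem_setOf_eq] at hw; linarith
    have hYne : Y.Nonempty := ⟨wp, hwp_ball, Or.inl (Or.inl hwp_N)⟩
    -- dichotomy for Y
    have hdich : Y ⊆ u ∨ Y ⊆ v := by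
      by_contra hcon
      push_neg at hcon
      obtain ⟨hnu, hnv⟩ := hcon
      obtain ⟨x, hxS, hxu⟩ := not_subset.mp hnu
      obtain ⟨y, hyS, hyv⟩ := not_subset.mp hnv
      have hxv : x ∈ v := (hcov (hYV hxS)).resolve_left hxu
      have hyu : y ∈ u := (hcov (hYV hyS)).resolve_right hyv
      obtain ⟨w, hwS, hwuv⟩ := hYpre u v huo hvo (hYV.trans hcov) ⟨y, hyS, hyu⟩ ⟨x, hxS, hxv⟩
      exact hsep w (hYV hwS) hwuv.1 hwuv.2
    rcases hdich with hYu | hYv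
    · exact engine a b hab U u v hUo hUc hbU hsegU huo hvo hcov hsep hune hvne
        ⟨rt, hrt, hrtC, hballt, hYu⟩
    · refine engine a b hab U v u hUo hUc hbU hsegU hvo huo ?_ ?_ hvne hune
        ⟨rt, hrt, hrtC, hballt, hYv⟩
      · rw [union_comm]; exact hcov
      · intro w hw hwv hwu; exact hsep w hw hwu hwv

lemma seg'_preconnected_all (a b : ℝ × ℝ) : IsPreconnected (segment ℝ a b \ {b}) := by
  rcases eq_or_ne a b with rfl | hab
  · rw [segment_same, Set.diff_self]
    exact isPreconnected_empty
  · exact seg'_preconnected hab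

lemma avoid_seg (a b z : ℝ × ℝ) (δ : ℝ) (hδ : 0 < δ) :
    ∃ w ∈ ball z δ, w ∉ segment ℝ a b := by
  rcases eq_or_ne a b with rfl | hab
  · rw [segment_same]
    by_cases hz : Nf a ((1,0) : ℝ × ℝ) z = 0
    · obtain ⟨w, hwb, hwP⟩ := near_plus a ((1,0) : ℝ × ℝ) z (by norm_num) hz δ hδ
      refine ⟨w, hwb, fun h => ?_⟩
      rw [mem_singleton_iff.mp h] at hwP
      simp [Nf] at hwP
    · refine ⟨z, mem_ball_self hδ, fun h => ?_⟩
      rw [mem_singleton_iff.mp h] at hz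
      simp [Nf] at hz
  · by_cases hz : Nf a (b-a) z = 0
    · obtain ⟨w, hwb, hwP⟩ := near_plus a (b-a) z (K_pos hab) hz δ hδ
      refine ⟨w, hwb, fun h => ?_⟩
      have := ((mem_segment_iff a b w hab).mp h).1
      linarith
    · exact ⟨z, mem_ball_self hδ, fun h =>
        hz ((mem_segment_iff a b z hab).mp h).1⟩

lemma closure_diff_seg (a b : ℝ × ℝ) (C : Set (ℝ × ℝ)) (hC : IsOpen C) :
    closure (C \ segment ℝ a b) = closure C := by
  apply subset_antisymm (closure_mono diff_subset)
  have h1 : C ⊆ closure (C \ segment ℝ a b) := by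
    intro z hz
    rw [_root_.mem_closure_iff]
    intro o ho hzo
    obtain ⟨δ, hδ, hδsub⟩ := Metric.isOpen_iff.mp (ho.inter hC) z ⟨hzo, hz⟩
    obtain ⟨w, hwb, hwseg⟩ := avoid_seg a b z δ hδ
    exact ⟨w, (hδsub hwb).1, (hδsub hwb).2, hwseg⟩
  calc closure C ⊆ closure (closure (C \ segment ℝ a b)) := closure_mono h1
    _ = closure (C \ segment ℝ a b) := closure_closure

section assembly

variable (γ : Set (ℝ × ℝ)) (a b : ℝ × ℝ)

lemma part1 (hγ : IsClosed γ) (hb : b ∈ γ) (hone : segment ℝ a b ∩ γ = {b})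
    (x : ℝ × ℝ) (hx : x ∉ γ ∪ segment ℝ a b) :
    connectedComponentIn (γ ∪ segment ℝ a b)ᶜ x =
      connectedComponentIn γᶜ x \ segment ℝ a b := by
  have hxγ : x ∉ γ := fun h => hx (Or.inl h)
  have hxe : x ∉ segment ℝ a b := fun h => hx (Or.inr h)
  set C := connectedComponentIn γᶜ x with hC
  have hCopen : IsOpen C := hγ.isOpen_compl.connectedComponentIn
  have hCpre : IsPreconnected C := isPreconnected_connectedComponentIn
  have hCsub : C ⊆ γᶜ := connectedComponentIn_subset _ _
  have hxC : x ∈ C := mem_connectedComponentIn hxγ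
  have hbC : b ∉ C := fun h => (hCsub h) hb
  have hsub1 : connectedComponentIn (γ ∪ segment ℝ a b)ᶜ x ⊆ C :=
    connectedComponentIn_mono x (compl_subset_compl.mpr subset_union_left)
  have hsub2 : ∀ w ∈ connectedComponentIn (γ ∪ segment ℝ a b)ᶜ x, w ∉ segment ℝ a b :=
    fun w hw he => (connectedComponentIn_subset _ _ hw) (Or.inr he)
  have hseg_compl : segment ℝ a b \ {b} ⊆ γᶜ := by
    intro w hw hwγ
    exact hw.2 (hone ▸ mem_inter hw.1 hwγ : w ∈ ({b} : Set (ℝ × ℝ)))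
  by_cases hcase : ((segment ℝ a b \ {b}) ∩ C).Nonempty
  · obtain ⟨z, hz1, hz2⟩ := hcase
    have hsubC : segment ℝ a b \ {b} ⊆ C := by
      intro w hw
      have h1 : w ∈ connectedComponentIn γᶜ z :=
        (seg'_preconnected_all a b).subset_connectedComponentIn hz1 hseg_compl hw
      have h2 : connectedComponentIn γᶜ x = connectedComponentIn γᶜ z :=
        connectedComponentIn_eq (show z ∈ connectedComponentIn γᶜ x from hz2)
      exact (h2.symm ▸ h1 : w ∈ connectedComponentIn γᶜ x)
    have hpre : IsPreconnected (C \ segment ℝ a b) :=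
      lemA a b C hCopen hCpre hbC hsubC
    have hsub3 : C \ segment ℝ a b ⊆ (γ ∪ segment ℝ a b)ᶜ := by
      rintro w ⟨hw1, hw2⟩ (h | h)
      · exact (hCsub hw1) h
      · exact hw2 h
    apply subset_antisymm
    · exact fun w hw => ⟨hsub1 hw, hsub2 w hw⟩
    · exact hpre.subset_connectedComponentIn ⟨hxC, hxe⟩ hsub3
  · have hCe : C \ segment ℝ a b = C := by
      apply subset_antisymm diff_subset
      intro w hw
      refine ⟨hw, fun he => ?_⟩
      have hwb : w ≠ b := fun h => hbC (h ▸ hw)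
      exact hcase ⟨w, ⟨he, hwb⟩, hw⟩
    rw [hCe]
    have hsub3 : C ⊆ (γ ∪ segment ℝ a b)ᶜ := by
      intro w hw
      rintro (h | h)
      · exact (hCsub hw) h
      · have hwb : w ≠ b := fun hh => hbC (hh ▸ hw)
        exact hcase ⟨w, ⟨h, hwb⟩, hw⟩
    apply subset_antisymm hsub1
    exact hCpre.subset_connectedComponentIn hxC hsub3

lemma part2 (hγ : IsClosed γ) (hb : b ∈ γ) (hone : segment ℝ a b ∩ γ = {b})
    (x : ℝ × ℝ) (hx : x ∉ γ ∪ segment ℝ a b) :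
    Bornology.IsBounded (connectedComponentIn (γ ∪ segment ℝ a b)ᶜ x) ↔
      Bornology.IsBounded (connectedComponentIn γᶜ x) := by
  rw [part1 γ a b hγ hb hone x hx]
  constructor
  · intro h
    have : connectedComponentIn γᶜ x ⊆
        (connectedComponentIn γᶜ x \ segment ℝ a b) ∪ segment ℝ a b := by
      intro w hw
      by_cases hws : w ∈ segment ℝ a b
      · exact Or.inr hws
      · exact Or.inl ⟨hw, hws⟩
    exact (h.union (segment_isCompact a b).isBounded).subset this
  · exact fun h => h.subset diff_subset

end assembly


lemma part3 (γ : Set (ℝ × ℝ)) (a b : ℝ × ℝ) (hγ : IsClosed γ) (hb : b ∈ γ)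
    (hone : segment ℝ a b ∩ γ = {b}) :
    fill (γ ∪ segment ℝ a b) = fill γ := by
  ext y
  simp only [fill, mem_iUnion, exists_prop, mem_setOf_eq]
  constructor
  · rintro ⟨x, ⟨hx, hbdd⟩, hy⟩
    have hxγ : x ∉ γ := fun h => hx (Or.inl h)
    refine ⟨x, ⟨hxγ, (part2 γ a b hγ hb hone x hx).mp hbdd⟩, ?_⟩
    rw [part1 γ a b hγ hb hone x hx,
      closure_diff_seg a b _ (hγ.isOpen_compl.connectedComponentIn)] at hy
    exact hy
  · rintro ⟨x, ⟨hxγ, hbdd⟩, hy⟩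
    have hxc : x ∈ γᶜ := hxγ
    have hCopen : IsOpen (connectedComponentIn γᶜ x) := hγ.isOpen_compl.connectedComponentIn
    have hxC : x ∈ connectedComponentIn γᶜ x := mem_connectedComponentIn hxc
    obtain ⟨δ, hδ, hδsub⟩ := Metric.isOpen_iff.mp hCopen x hxC
    obtain ⟨w, hwb, hwseg⟩ := avoid_seg a b x δ hδ
    have hwC : w ∈ connectedComponentIn γᶜ x := hδsub hwb
    have hwγ : w ∉ γ := fun h => (connectedComponentIn_subset _ _ hwC) h
    have hw : w ∉ γ ∪ segment ℝ a b := by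
      rintro (h | h)
      · exact hwγ h
      · exact hwseg h
    have hcomp : connectedComponentIn γᶜ x = connectedComponentIn γᶜ w :=
      connectedComponentIn_eq hwC
    refine ⟨w, ⟨hw, ?_⟩, ?_⟩
    · rw [part2 γ a b hγ hb hone w hw, ← hcomp]
      exact hbdd
    · rw [part1 γ a b hγ hb hone w hw,
        closure_diff_seg a b _ (hγ.isOpen_compl.connectedComponentIn), ← hcomp]
      exact hy

/-- Attaching a pendant segment `e = [a, b]` to a connected planar graph embedding
`γ` (with exactly one endpoint `b` on `γ` and otherwise disjoint from `γ`) creates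
no new bounded face: the faces of `γ ∪ e` are the faces of `γ` with `e` removed
(with identical boundedness), `U(γ ∪ e) = U(γ)`, and the boundary of `U(γ ∪ e)`
equals the boundary of `U(γ)`. -/
theorem pendant_edge_creates_no_new_bounded_face
    (γ : Set (ℝ × ℝ)) (hγ : IsClosed γ) (hconn : IsConnected γ) (hcpt : IsCompact γ)
    (a b : ℝ × ℝ) (hb : b ∈ γ) (hone : segment ℝ a b ∩ γ = {b}) :
    (∀ x ∉ γ ∪ segment ℝ a b,
        connectedComponentIn (γ ∪ segment ℝ a b)ᶜ x =
          connectedComponentIn γᶜ x \ segment ℝ a b) ∧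
    (∀ x ∉ γ ∪ segment ℝ a b,
        (Bornology.IsBounded (connectedComponentIn (γ ∪ segment ℝ a b)ᶜ x) ↔
          Bornology.IsBounded (connectedComponentIn γᶜ x))) ∧
    fill (γ ∪ segment ℝ a b) = fill γ ∧
    frontier (fill (γ ∪ segment ℝ a b)) = frontier (fill γ) := by
  refine ⟨part1 γ a b hγ hb hone, part2 γ a b hγ hb hone, part3 γ a b hγ hb hone, ?_⟩
  rw [part3 γ a b hγ hb hone]
end

section
/- Let Π' be a connected planar subdivision containing all edges of the boundary of U(γ) for a connected component γ, where U(γ) is the union of closures of bounded faces of Π_γ. If a point q lies in U(γ), then q lies in the closure of some bounded face of Π', and hence in some cell of the vertical decomposition of Π'. -/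
open Set Metric Bornology

theorem IsPreconnected.subset_of_disjoint_frontier {X : Type*} [TopologicalSpace X]
    {s F : Set X} (hs : IsPreconnected s) (hsF : Disjoint s (frontier F))
    (hne : (s ∩ F).Nonempty) : s ⊆ F := by
  have hcover : s ⊆ interior F ∪ interior Fᶜ := by
    rwa [← compl_frontier_eq_union_interior, subset_compl_iff_disjoint_right]
  rcases hs.subset_or_subset isOpen_interior isOpen_interior
      (disjoint_compl_right.mono interior_subset interior_subset) hcover with hin | hout
  · exact hin.trans interior_subset
  · obtain ⟨y, hys, hyF⟩ := hne
    exact absurd hyF (interior_subset (hout hys))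

/-- A ray escaping from `closedBall 0 R` would stay in the component, which is bounded. -/
theorem connectedComponentIn_compl_subset_closedBall {E : Type*} [NormedAddCommGroup E]
    [NormedSpace ℝ E] {K : Set E} {R : ℝ} (hR : 0 ≤ R) (hK : K ⊆ closedBall 0 R) {x : E}
    (hbd : IsBounded (connectedComponentIn Kᶜ x)) : connectedComponentIn Kᶜ x ⊆ closedBall 0 R := by
  intro c hc
  by_contra hc_out
  have hcR : R < ‖c‖ := by simpa using hc_out
  have hc0 : 0 < ‖c‖ := hR.trans_lt hcR
  have norm_ray : ∀ t : ℝ, 1 ≤ t → ‖t • c‖ = t * ‖c‖ := fun t ht => by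
    rw [norm_smul, Real.norm_of_nonneg (zero_le_one.trans ht)]
  have hray : (fun t : ℝ => t • c) '' Ici 1 ⊆ Kᶜ := by
    rintro _ ⟨t, ht, rfl⟩ htK
    have := mem_closedBall_zero_iff.mp (hK htK)
    rw [norm_ray t ht] at this
    nlinarith [mem_Ici.mp ht]
  have hray_sub : (fun t : ℝ => t • c) '' Ici 1 ⊆ connectedComponentIn Kᶜ x := by
    rw [connectedComponentIn_eq hc]
    exact (isPreconnected_Ici.image _ (by fun_prop)).subset_connectedComponentIn
      ⟨1, self_mem_Ici, one_smul ℝ c⟩ hray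
  obtain ⟨r, hr0, hr⟩ := hbd.exists_pos_norm_le
  have ht : 1 ≤ r / ‖c‖ + 1 := by have := div_pos hr0 hc0; linarith
  have := hr _ (hray_sub ⟨_, ht, rfl⟩)
  rw [norm_ray _ ht, add_mul, div_mul_cancel₀ _ hc0.ne'] at this
  linarith

theorem isBounded_fill {K : Set (ℝ × ℝ)} (hK : IsBounded K) : IsBounded (fill K) := by
  obtain ⟨R, hKR⟩ := hK.subset_closedBall 0
  have hKR' : K ⊆ closedBall 0 (max R 0) := hKR.trans (closedBall_subset_closedBall le_sup_left)
  refine (isBounded_closedBall (x := 0) (r := max R 0)).subset (iUnion₂_subset ?_)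
  rintro x ⟨-, hbd⟩
  exact closure_minimal (connectedComponentIn_compl_subset_closedBall le_sup_right hKR' hbd)
    isClosed_closedBall

theorem point_of_fill_in_closure_of_bounded_face_general
    (γ : Set (ℝ × ℝ))
    (hγcpt : IsCompact γ)
    (E' : Set (ℝ × ℝ))
    (hsub : E' ⊆ γ) (hbd : frontier (fill γ) ⊆ E')
    (q : ℝ × ℝ) (hq : q ∈ fill γ) :
    ∃ x, x ∉ E' ∧ Bornology.IsBounded (connectedComponentIn E'ᶜ x) ∧
      q ∈ closure (connectedComponentIn E'ᶜ x) := by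
  obtain ⟨x, ⟨hxγ, hCbd⟩, hqC⟩ := mem_iUnion₂.mp hq
  have hxE' : x ∉ E' := fun h => hxγ (hsub h)
  have hCD : connectedComponentIn γᶜ x ⊆ connectedComponentIn E'ᶜ x :=
    connectedComponentIn_mono x (compl_subset_compl.mpr hsub)
  refine ⟨x, hxE', ?_, closure_mono hCD hqC⟩
  have hx_fill : x ∈ fill γ :=
    mem_iUnion₂.mpr ⟨x, ⟨hxγ, hCbd⟩, subset_closure (mem_connectedComponentIn hxγ)⟩
  have hD_fill : connectedComponentIn E'ᶜ x ⊆ fill γ :=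
    isPreconnected_connectedComponentIn.subset_of_disjoint_frontier
      ((disjoint_compl_left.mono_right hbd).mono_left (connectedComponentIn_subset _ _))
      ⟨x, mem_connectedComponentIn hxE', hx_fill⟩
  exact (isBounded_fill hγcpt.isBounded).subset hD_fill

/-- Let `γ` be a connected component (a compact connected set of edges and vertices)
and `Π'` a connected subdivision, with edge union `E' ⊆ γ`, containing all edges of
the boundary of `U(γ)` (i.e. `frontier (fill γ) ⊆ E'`).  If a point `q` lies in
`U(γ)`, then `q` lies in the closure of some bounded face of `Π'` (and hence in some
cell of the vertical decomposition of `Π'`). -/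
theorem point_of_fill_in_closure_of_bounded_face
    (γ : Set (ℝ × ℝ)) (hγc : IsClosed γ) (hγconn : IsConnected γ)
    (hγcpt : IsCompact γ)
    (E' : Set (ℝ × ℝ)) (hE'c : IsClosed E') (hE'conn : IsConnected E')
    (hsub : E' ⊆ γ) (hbd : frontier (fill γ) ⊆ E')
    (q : ℝ × ℝ) (hq : q ∈ fill γ) :
    ∃ x, x ∉ E' ∧ Bornology.IsBounded (connectedComponentIn E'ᶜ x) ∧
      q ∈ closure (connectedComponentIn E'ᶜ x) :=
  point_of_fill_in_closure_of_bounded_face_general γ hγcpt E' hsub hbd q hq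
end

section
/- Let γ and γ_q be two disjoint connected planar graph embeddings such that some bounded face of the subdivision induced by γ contains in its closure a point q, and the upper side of the vertical-decomposition cell of Π_γ containing q lies strictly below the upper side of the cell of Π_{γ_q} containing q (along the upward ray from q). If γ_q contains the outer boundary of the face of the overall subdivision containing q, this situation is impossible: γ would have to be contained in the interior of U(γ_q), contradicting that the outer boundary of the face containing q lies on γ_q. -/
/-- The closure of a connected component of an open planar set stays inside the
component, except for points outside the open set. -/
lemma closure_ccIn_subset {U : Set (ℝ × ℝ)} (hU : IsOpen U) (x : ℝ × ℝ) :
    closure (connectedComponentIn U x) ⊆ connectedComponentIn U x ∪ Uᶜ := by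
  intro y hy
  by_cases hyU : y ∈ U
  · left
    obtain ⟨r, hr, hball⟩ := Metric.isOpen_iff.mp hU y hyU
    obtain ⟨z, hz, hdz⟩ := Metric.mem_closure_iff.mp hy r hr
    have hzb : z ∈ Metric.ball y r := by
      simpa [Metric.mem_ball, dist_comm] using hdz
    have hsub : Metric.ball y r ⊆ connectedComponentIn U z :=
      (convex_ball y r).isPreconnected.subset_connectedComponentIn hzb hball
    have : connectedComponentIn U x = connectedComponentIn U z := connectedComponentIn_eq hz
    rw [this]
    exact hsub (Metric.mem_ball_self hr)
  · exact Or.inr hyU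

/-- Connected components of a closed planar set are closed. -/
lemma isClosed_ccIn {E : Set (ℝ × ℝ)} (hE : IsClosed E) {x : ℝ × ℝ} (hx : x ∈ E) :
    IsClosed (connectedComponentIn E x) := by
  rw [connectedComponentIn_eq_image hx]
  exact hE.isClosedEmbedding_subtypeVal.isClosedMap _ isClosed_connectedComponent


/-- The heights at which the upward vertical ray from `q` meets the set `s`. -/
def aboveHits (q : ℝ × ℝ) (s : Set (ℝ × ℝ)) : Set ℝ :=
  {y | q.2 ≤ y ∧ (q.1, y) ∈ s}

/-- The impossible configuration in Lemma 1 of the paper.  Let `γ` and `γq` be two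
distinct (hence disjoint) connected components of the edge-vertex union `E` of a
planar subdivision, let `q` lie in a bounded face `F_q` of the subdivision whose
outer boundary `B` lies on `γq`, and suppose `q ∈ U(γ)` (some bounded face of the
subdivision induced by `γ` contains `q` in its closure) while the upward vertical
ray from `q` hits `γ` strictly before it hits `γq` (the upper side of `γ`'s cell
lies strictly below the upper side of `γq`'s cell).  This situation is impossible:
`γ` would have to lie in the interior of `U(γq)`, contradicting that the outer
boundary of `F_q` lies on `γq`. -/
theorem lower_cell_of_other_component_impossible
    (E : Set (ℝ × ℝ)) (hE : IsClosed E) (q : ℝ × ℝ) (hq : q ∉ E)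
    (hFbdd : Bornology.IsBounded (connectedComponentIn Eᶜ q))
    (B : Set (ℝ × ℝ)) (hB : IsOuterBoundary (connectedComponentIn Eᶜ q) B)
    (γ γq : Set (ℝ × ℝ)) (hγ : γ ∈ componentsOf E) (hγq : γq ∈ componentsOf E)
    (hne : γ ≠ γq) (hBγq : B ⊆ γq)
    (hqU : q ∈ fill γ)
    (hhitγ : (aboveHits q γ).Nonempty) (hhitγq : (aboveHits q γq).Nonempty)
    (hbelow : sInf (aboveHits q γ) < sInf (aboveHits q γq)) :
    False := by
  classical
  -- Unpack the components γ and γq.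
  obtain ⟨x, hxE, rfl⟩ := hγ
  obtain ⟨xq, hxqE, rfl⟩ := hγq
  set γ := connectedComponentIn E x with hγdef
  set γq := connectedComponentIn E xq with hγqdef
  have hγE : γ ⊆ E := connectedComponentIn_subset E x
  have hγqE : γq ⊆ E := connectedComponentIn_subset E xq
  have hγcl : IsClosed γ := isClosed_ccIn hE hxE
  have hγqcl : IsClosed γq := isClosed_ccIn hE hxqE
  have hγo : IsOpen γᶜ := hγcl.isOpen_compl
  have hγqo : IsOpen γqᶜ := hγqcl.isOpen_compl
  -- γ and γq are disjoint.
  have hdisj : ∀ z, z ∈ γ → z ∉ γq := by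
    intro z hz hz'
    exact hne ((connectedComponentIn_eq hz).trans (connectedComponentIn_eq hz').symm)
  have hqγ : q ∉ γ := fun h => hq (hγE h)
  have hqγq : q ∉ γq := fun h => hq (hγqE h)
  -- The first hit of γ on the upward ray from q.
  set a := sInf (aboveHits q γ) with ha
  set b := sInf (aboveHits q γq) with hb
  have hhitsγ_closed : IsClosed (aboveHits q γ) := by
    have : aboveHits q γ = Set.Ici q.2 ∩ (fun y : ℝ => ((q.1 : ℝ), y)) ⁻¹' γ := by
      ext y; simp [aboveHits, Set.mem_Ici, and_comm]
    rw [this]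
    exact isClosed_Ici.inter (hγcl.preimage (by fun_prop))
  have hbdd₁ : BddBelow (aboveHits q γ) := ⟨q.2, fun y hy => hy.1⟩
  have hbdd₂ : BddBelow (aboveHits q γq) := ⟨q.2, fun y hy => hy.1⟩
  have haMem : a ∈ aboveHits q γ := hhitsγ_closed.csInf_mem hhitγ hbdd₁
  have hq2a : q.2 ≤ a := haMem.1
  have hpaγ : (q.1, a) ∈ γ := haMem.2
  -- The vertical segment from q up to height a avoids γq.
  set S : Set (ℝ × ℝ) := (fun t : ℝ => ((q.1 : ℝ), t)) '' Set.Icc q.2 a with hS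
  have hSγq : S ⊆ γqᶜ := by
    rintro _ ⟨t, ⟨ht1, ht2⟩, rfl⟩ hmem
    have : b ≤ t := csInf_le hbdd₂ ⟨ht1, hmem⟩
    exact absurd (lt_of_lt_of_le hbelow this) (not_lt.mpr ht2)
  have hSpre : IsPreconnected S :=
    isPreconnected_Icc.image _ (Continuous.continuousOn (by fun_prop))
  have hqS : q ∈ S := ⟨q.2, ⟨le_refl _, hq2a⟩, by simp⟩
  have hpaS : (q.1, a) ∈ S := ⟨a, ⟨hq2a, le_refl _⟩, rfl⟩
  -- W : the bounded component of γᶜ containing q.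
  set W := connectedComponentIn γᶜ q with hW
  have hWo : IsOpen W := hγo.connectedComponentIn
  have hWbdd : Bornology.IsBounded W := by
    simp only [fill, Set.mem_iUnion, Set.mem_setOf_eq] at hqU
    obtain ⟨x₀, ⟨hx₀γ, hx₀bdd⟩, hqcl⟩ := hqU
    have hqC : q ∈ connectedComponentIn γᶜ x₀ := by
      have := closure_ccIn_subset hγo x₀ hqcl
      rcases this with h | h
      · exact h
      · exact absurd hqγ (by simpa using h)
    have : connectedComponentIn γᶜ x₀ = W := connectedComponentIn_eq hqC
    rwa [this] at hx₀bdd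
  have hclW : closure W ⊆ W ∪ γ := by
    have := closure_ccIn_subset hγo q
    simpa using this
  -- V : the bounded component of γqᶜ containing q.
  set V := connectedComponentIn γqᶜ q with hV
  have hVo : IsOpen V := hγqo.connectedComponentIn
  have hVbdd : Bornology.IsBounded V := by
    have hqF : q ∈ connectedComponentIn Eᶜ q := mem_connectedComponentIn hq
    have hBbdd := hB.2 q hqF
    exact hBbdd.subset (connectedComponentIn_mono q (Set.compl_subset_compl.mpr hBγq))
  have hclV : closure V ⊆ V ∪ γq := by
    have := closure_ccIn_subset hγqo q
    simpa using this
  -- γq ⊆ W.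
  have hγqW : γq ⊆ W := by
    obtain ⟨z, hzfr, hBz⟩ := hB.1
    have hzB : z ∈ B := by rw [hBz]; exact mem_connectedComponentIn hzfr
    have hzγq : z ∈ γq := hBγq hzB
    have hFW : connectedComponentIn Eᶜ q ⊆ W :=
      isPreconnected_connectedComponentIn.subset_connectedComponentIn
        (mem_connectedComponentIn hq)
        ((connectedComponentIn_subset Eᶜ q).trans (Set.compl_subset_compl.mpr hγE))
    have hzclW : z ∈ closure W := closure_mono hFW (frontier_subset_closure hzfr)
    have hzW : z ∈ W := by
      rcases hclW hzclW with h | h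
      · exact h
      · exact absurd hzγq (hdisj z h)
    have hγqc : γq ⊆ γᶜ := fun w hw => fun hw' => hdisj w hw' hw
    have : γq ⊆ connectedComponentIn γᶜ z :=
      isPreconnected_connectedComponentIn.subset_connectedComponentIn hzγq hγqc
    rwa [← connectedComponentIn_eq hzW] at this
  -- γ ⊆ V.
  have hγV : γ ⊆ V := by
    have hSV : S ⊆ V := hSpre.subset_connectedComponentIn hqS hSγq
    have hpaV : (q.1, a) ∈ V := hSV hpaS
    have hγc : γ ⊆ γqᶜ := fun w hw => hdisj w hw
    have : γ ⊆ connectedComponentIn γqᶜ (q.1, a) :=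
      isPreconnected_connectedComponentIn.subset_connectedComponentIn hpaγ hγc
    rwa [← connectedComponentIn_eq hpaV] at this
  -- W ∪ V is a nonempty bounded clopen set: contradiction.
  set K := W ∪ V with hK
  have hKo : IsOpen K := hWo.union hVo
  have hKcl : IsClosed K := by
    rw [← closure_subset_iff_isClosed]
    calc closure K ⊆ closure W ∪ closure V := by rw [hK, closure_union]
      _ ⊆ (W ∪ γ) ∪ (V ∪ γq) := Set.union_subset_union hclW hclV
      _ ⊆ K := by
          rw [hK]
          intro w hw
          rcases hw with (h | h) | (h | h)
          · exact Or.inl h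
          · exact Or.inr (hγV h)
          · exact Or.inr h
          · exact Or.inl (hγqW h)
  have hKne : K.Nonempty := ⟨q, Or.inl (mem_connectedComponentIn hqγ)⟩
  have hKbdd : Bornology.IsBounded K := hWbdd.union hVbdd
  rcases isClopen_iff.mp ⟨hKcl, hKo⟩ with h | h
  · exact hKne.ne_empty h
  · obtain ⟨r, hr⟩ := hKbdd.subset_closedBall (0 : ℝ × ℝ)
    have : ((0 : ℝ), r + 1) ∈ Metric.closedBall (0 : ℝ × ℝ) r := hr (h ▸ Set.mem_univ _)
    rw [Metric.mem_closedBall] at this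
    have hd : dist (((0 : ℝ), r + 1) : ℝ × ℝ) 0 = |r + 1| := by
      simp [Prod.dist_eq, Real.dist_eq, Prod.norm_def, Real.norm_eq_abs]
    rw [hd] at this
    have : r + 1 ≤ r := le_trans (le_abs_self _) this
    linarith
end
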